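/- arXiv:1906.07255 — 6 statements merged into one kernel-verified Lean document; each statement's English description precedes it below -/
import Mathlib

section
/- For all real x in [-1,1], x^2 + x + 1 - e^x ≥ (3 - e) x^2. -/
open Nat Finset

namespace Real

lemma exp_eq_sum_range_add_tsum (n : ℕ) (x : ℝ) :
    exp x = ∑ k ∈ range n, x ^ k / k ! + ∑' k : ℕ, x ^ (k + n) / (k + n)! := by
  rw [exp_eq_exp_ℝ, NormedSpace.exp_eq_tsum_div,
    (summable_pow_div_factorial x).sum_add_tsum_nat_add n]

lemma exp_sub_sum_range_le (n : ℕ) {x : ℝ} (hx : |x| ≤ 1) :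
    exp x - ∑ k ∈ range n, x ^ k / k ! ≤ |x| ^ n * (exp 1 - ∑ k ∈ range n, 1 / (k ! : ℝ)) := by
  have hsum (y : ℝ) : Summable fun k : ℕ => y ^ (k + n) / (k + n)! :=
    (summable_nat_add_iff n).2 (summable_pow_div_factorial y)
  have hterm (k : ℕ) : x ^ (k + n) / (k + n)! ≤ |x| ^ n * (1 ^ (k + n) / (k + n)!) := by
    rw [one_pow, mul_one_div]
    gcongr
    calc x ^ (k + n) ≤ |x| ^ (k + n) := by rw [← abs_pow]; exact le_abs_self _
      _ ≤ |x| ^ n := pow_le_pow_of_le_one (abs_nonneg x) hx (by omega)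
  have h1 := exp_eq_sum_range_add_tsum n 1
  simp only [one_pow] at h1
  calc exp x - ∑ k ∈ range n, x ^ k / k ! = ∑' k : ℕ, x ^ (k + n) / (k + n)! := by
        rw [exp_eq_sum_range_add_tsum n x]; ring
    _ ≤ ∑' k : ℕ, |x| ^ n * (1 ^ (k + n) / (k + n)!) :=
        (hsum x).tsum_le_tsum hterm ((hsum 1).mul_left _)
    _ = |x| ^ n * (exp 1 - ∑ k ∈ range n, 1 / (k ! : ℝ)) := by
        simp only [one_pow, tsum_mul_left, h1, add_sub_cancel_left]

end Real

theorem stmt_0 (x : ℝ) (hx : x ∈ Set.Icc (-1 : ℝ) 1) :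
    (3 - Real.exp 1) * x ^ 2 ≤ x ^ 2 + x + 1 - Real.exp x := by
  have h := Real.exp_sub_sum_range_le 2 (abs_le.2 hx)
  simp only [sum_range_succ, sum_range_zero, sq_abs] at h
  norm_num at h
  linarith
end

section
/- For all real x in [-1,1], -x + x^2 + 1 - e^{-x} ≥ (3 - e) x^2. -/
/-! Beyond its linear part, the exponential series is `∑_{n ≥ 2} t^n / n!`, and for `|t| ≤ 1`
each term is at most `t^2 / n!`; summing gives `e^t - 1 - t ≤ (e - 2) t^2`, which at `t = -x`
is the claim. -/

open scoped Nat

namespace Real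

lemma hasSum_pow_add_two_div_factorial (t : ℝ) :
    HasSum (fun n : ℕ => t ^ (n + 2) / (n + 2)!) (exp t - 1 - t) := by
  have h := (hasSum_nat_add_iff' 2).mpr (NormedSpace.expSeries_div_hasSum_exp t)
  simpa [← exp_eq_exp_ℝ, Finset.sum_range_succ, sub_sub] using h

lemma exp_sub_one_sub_le_mul_sq {t : ℝ} (ht : |t| ≤ 1) :
    exp t - 1 - t ≤ (exp 1 - 2) * t ^ 2 := by
  have h_one : HasSum (fun n : ℕ => t ^ 2 * (1 / (n + 2)!)) ((exp 1 - 1 - 1) * t ^ 2) := by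
    rw [mul_comm]
    simpa using (hasSum_pow_add_two_div_factorial 1).mul_left (t ^ 2)
  refine (hasSum_le (fun n => ?_) (hasSum_pow_add_two_div_factorial t) h_one).trans_eq
    (by ring)
  have h_pow : t ^ (n + 2) ≤ t ^ 2 :=
    calc t ^ (n + 2) ≤ |t| ^ (n + 2) := (le_abs_self _).trans_eq (abs_pow t _)
      _ ≤ |t| ^ 2 := pow_le_pow_of_le_one (abs_nonneg t) ht (by omega)
      _ = t ^ 2 := sq_abs t
  rw [mul_one_div]
  gcongr

end Real

theorem stmt_1 (x : ℝ) (hx : x ∈ Set.Icc (-1 : ℝ) 1) :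
    (3 - Real.exp 1) * x ^ 2 ≤ -x + x ^ 2 + 1 - Real.exp (-x) := by
  have hx' : |-x| ≤ 1 := abs_le.mpr ⟨by linarith [hx.2], by linarith [hx.1]⟩
  have h := Real.exp_sub_one_sub_le_mul_sq hx'
  rw [neg_sq] at h
  linarith
end

section
/- Let A be a d×d real symmetric positive semidefinite matrix with all eigenvalues in [0,1], and let a be a real number. Then (1 - e^a)·A ⪯ I - exp(a·A), i.e., I - exp(a·A) - (1 - e^a)·A is positive semidefinite. -/
/-!
For `t ∈ [0, 1]`, convexity of `exp` gives `exp (a t) ≤ (1 - t) + t eᵃ`, i.e.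
`0 ≤ 1 - exp (a t) - (1 - eᵃ) t`. The spectrum of `A` lies in `[0, 1]`, so applying this
scalar inequality through the continuous functional calculus (which turns `exp (a • A)` into
`cfc (fun t ↦ exp (a t)) A`) yields the matrix inequality.
-/

theorem Real.exp_mul_le_one_sub_add_mul_exp (a : ℝ) {t : ℝ} (h₀ : 0 ≤ t) (h₁ : t ≤ 1) :
    Real.exp (a * t) ≤ 1 - t + t * Real.exp a := by
  have := convexOn_exp.2 (Set.mem_univ 0) (Set.mem_univ a) (sub_nonneg.2 h₁) h₀ (by ring)
  simpa [mul_comm t a] using this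

section
variable {A : Type*} [NormedRing A] [StarRing A] [NormedAlgebra ℝ A] [PartialOrder A]
  [StarOrderedRing A] [StarModule ℝ A] [ContinuousFunctionalCalculus ℝ A IsSelfAdjoint]

theorem IsSelfAdjoint.smul_le_one_sub_exp_smul {x : A} (hx : IsSelfAdjoint x)
    (hspec : spectrum ℝ x ⊆ Set.Icc 0 1) (a : ℝ) :
    (1 - Real.exp a) • x ≤ 1 - NormedSpace.exp (a • x) := by
  have hexp : NormedSpace.exp (a • x) = cfc (fun t ↦ Real.exp (a * t)) x := by
    rw [← CFC.real_exp_eq_normedSpace_exp, ← cfc_comp_smul a Real.exp x]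
    rfl
  have key : 1 - NormedSpace.exp (a • x) - (1 - Real.exp a) • x
      = cfc (fun t ↦ 1 - Real.exp (a * t) - (1 - Real.exp a) * t) x := by
    rw [cfc_sub .., cfc_sub .., cfc_const_one .., cfc_const_mul .., cfc_id' .., hexp]
  rw [← sub_nonneg, key]
  refine cfc_nonneg fun t ht ↦ ?_
  obtain ⟨h₀, h₁⟩ := hspec ht
  linarith [Real.exp_mul_le_one_sub_add_mul_exp a h₀ h₁]
end

theorem stmt_4 {d : ℕ} (A : Matrix (Fin d) (Fin d) ℝ) (hA : A.PosSemidef)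
    (hev : ∀ i, hA.1.eigenvalues i ∈ Set.Icc (0 : ℝ) 1) (a : ℝ) :
    (1 - NormedSpace.exp (a • A) - (1 - Real.exp a) • A).PosSemidef := by
  have hspec : spectrum ℝ A ⊆ Set.Icc 0 1 := by
    rw [hA.1.spectrum_real_eq_range_eigenvalues]
    exact Set.range_subset_iff.2 hev
  -- The operator norm only serves to make matrices a normed algebra; `exp` does not depend on it.
  open scoped Matrix.Norms.L2Operator MatrixOrder in
  exact Matrix.nonneg_iff_posSemidef.1 <| sub_nonneg.2 <|
    hA.1.isSelfAdjoint.smul_le_one_sub_exp_smul hspec a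
end

section
/- Let U* be the k×k matrix defined by U*_{ij} = 2·[i=j] - 1 (i.e., +1 on the diagonal and -1 off-diagonal). Define P, Q ∈ ℝ^{k×(k+1)} by P_{ij} = √2·[i=j] + [j=k+1] and Q_{ij} = √2·[i=j] - [j=k+1]. Then P Qᵀ = U*, and consequently the max-norm of U* satisfies γ₂(U*) ≤ 3. -/
/-! Row `i` of `P` (resp. `Q`) is `√2 eᵢ + e_{k+1}` (resp. `√2 eᵢ - e_{k+1}`), so
`⟪Pᵢ, Qⱼ⟫ = 2[i=j] - 1` and every row has norm `√3`; the factorization then bounds the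
max-norm by `√3 · √3`. -/

open Matrix

/-- The maximum Euclidean row norm of a matrix. -/
noncomputable def rowNormMax {m d : ℕ} (P : Matrix (Fin m) (Fin d) ℝ) : ℝ :=
  ⨆ i, Real.sqrt (∑ j, (P i j) ^ 2)

/-- The max-norm (γ₂ norm): infimum over factorizations `X = P * Qᵀ` of the
product of maximum row norms. -/
noncomputable def maxNorm {m n : ℕ} (X : Matrix (Fin m) (Fin n) ℝ) : ℝ :=
  sInf {c | ∃ (d : ℕ) (P : Matrix (Fin m) (Fin d) ℝ) (Q : Matrix (Fin n) (Fin d) ℝ),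
    X = P * Qᵀ ∧ c = rowNormMax P * rowNormMax Q}

/-- `U*` with `+1` on the diagonal and `-1` off the diagonal. -/
def Ustar (k : ℕ) : Matrix (Fin k) (Fin k) ℝ :=
  Matrix.of fun i j => if i = j then 1 else -1

/-- `P` with `P_{ij} = √2·[i=j] + [j=k+1]`. -/
noncomputable def Pmat (k : ℕ) : Matrix (Fin k) (Fin (k + 1)) ℝ :=
  Matrix.of fun i j =>
    (if (j : ℕ) = (i : ℕ) then Real.sqrt 2 else 0) + (if (j : ℕ) = k then 1 else 0)

/-- `Q` with `Q_{ij} = √2·[i=j] - [j=k+1]`. -/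
noncomputable def Qmat (k : ℕ) : Matrix (Fin k) (Fin (k + 1)) ℝ :=
  Matrix.of fun i j =>
    (if (j : ℕ) = (i : ℕ) then Real.sqrt 2 else 0) - (if (j : ℕ) = k then 1 else 0)


lemma rowNormMax_nonneg {m d : ℕ} (P : Matrix (Fin m) (Fin d) ℝ) : 0 ≤ rowNormMax P :=
  Real.iSup_nonneg fun _ => Real.sqrt_nonneg _

lemma rowNormMax_le_sqrt {m d : ℕ} {P : Matrix (Fin m) (Fin d) ℝ} {r : ℝ}
    (h : ∀ i, ∑ j, P i j ^ 2 ≤ r) : rowNormMax P ≤ Real.sqrt r :=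
  Real.iSup_le (fun i => Real.sqrt_le_sqrt (h i)) (Real.sqrt_nonneg r)

lemma maxNorm_le_of_eq_mul_transpose {m n d : ℕ} {X : Matrix (Fin m) (Fin n) ℝ}
    {P : Matrix (Fin m) (Fin d) ℝ} {Q : Matrix (Fin n) (Fin d) ℝ} (h : X = P * Qᵀ) :
    maxNorm X ≤ rowNormMax P * rowNormMax Q := by
  refine csInf_le ⟨0, ?_⟩ ⟨d, P, Q, h, rfl⟩
  rintro c ⟨d', P', Q', -, rfl⟩
  exact mul_nonneg (rowNormMax_nonneg P') (rowNormMax_nonneg Q')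

lemma sum_sq_single_add_single {n R : Type*} [Fintype n] [DecidableEq n] [CommSemiring R]
    {x y : n} (hxy : x ≠ y) (a b : R) :
    ∑ j, (Pi.single x a + Pi.single y b : n → R) j ^ 2 = a ^ 2 + b ^ 2 := by
  simp only [sq]
  change (Pi.single x a + Pi.single y b : n → R) ⬝ᵥ (Pi.single x a + Pi.single y b) = _
  simp [hxy, hxy.symm]

lemma Pmat_row (k : ℕ) (i : Fin k) :
    Pmat k i = Pi.single i.castSucc (Real.sqrt 2) + Pi.single (Fin.last k) 1 := by
  ext j
  simp only [Pmat, of_apply, Pi.add_apply, Pi.single_apply, Fin.ext_iff, Fin.val_castSucc,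
    Fin.val_last]

lemma Qmat_row (k : ℕ) (i : Fin k) :
    Qmat k i = Pi.single i.castSucc (Real.sqrt 2) + Pi.single (Fin.last k) (-1) := by
  ext j
  simp only [Qmat, of_apply, Pi.add_apply, Pi.single_apply, Fin.ext_iff, Fin.val_castSucc,
    Fin.val_last]
  split_ifs <;> ring

lemma Pmat_mul_transpose_Qmat (k : ℕ) : Pmat k * (Qmat k)ᵀ = Ustar k := by
  ext i j
  rw [Matrix.mul_apply']
  simp only [transpose_apply, Pmat_row, Qmat_row, Ustar, of_apply, add_dotProduct,
    single_dotProduct, Pi.add_apply, Pi.single_apply, Fin.castSucc_inj,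
    (Fin.castSucc_lt_last i).ne, (Fin.castSucc_lt_last j).ne', if_false, if_true]
  split_ifs <;> norm_num

lemma sum_sq_Pmat_row (k : ℕ) (i : Fin k) : ∑ j, Pmat k i j ^ 2 = 3 := by
  rw [Pmat_row, sum_sq_single_add_single (Fin.castSucc_lt_last i).ne]
  norm_num

lemma sum_sq_Qmat_row (k : ℕ) (i : Fin k) : ∑ j, Qmat k i j ^ 2 = 3 := by
  rw [Qmat_row, sum_sq_single_add_single (Fin.castSucc_lt_last i).ne]
  norm_num

theorem stmt_8_general (k : ℕ) :
    Pmat k * (Qmat k)ᵀ = Ustar k ∧ maxNorm (Ustar k) ≤ 3 := by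
  refine ⟨Pmat_mul_transpose_Qmat k, ?_⟩
  calc maxNorm (Ustar k) ≤ rowNormMax (Pmat k) * rowNormMax (Qmat k) :=
        maxNorm_le_of_eq_mul_transpose (Pmat_mul_transpose_Qmat k).symm
    _ ≤ Real.sqrt 3 * Real.sqrt 3 :=
        mul_le_mul (rowNormMax_le_sqrt fun i => (sum_sq_Pmat_row k i).le)
          (rowNormMax_le_sqrt fun i => (sum_sq_Qmat_row k i).le)
          (rowNormMax_nonneg _) (Real.sqrt_nonneg _)
    _ = 3 := Real.mul_self_sqrt (by norm_num)

theorem stmt_8 (k : ℕ) (hk : 0 < k) :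
    Pmat k * (Qmat k)ᵀ = Ustar k ∧ maxNorm (Ustar k) ≤ 3 :=
  stmt_8_general k
end

section
/- The max-norm is block-invariant: for all positive integers m ≥ k and n ≥ ℓ, every block expansion matrix R ∈ {0,1}^{m×k} (each row has exactly one 1, and R has rank k), every block expansion matrix C ∈ {0,1}^{n×ℓ}, and every matrix X ∈ ℝ^{k×ℓ}, one has γ₂(R X Cᵀ) = γ₂(X). -/
open Matrix

/-- A block expansion matrix: each row is a standard basis vector and the rank is
full (each column is used at least once). -/
def IsBlockExpansion {m k : ℕ} (R : Matrix (Fin m) (Fin k) ℝ) : Prop :=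
  (∀ i, ∃ j, ∀ j', R i j' = if j' = j then 1 else 0) ∧ R.rank = k

lemma rowNormMax_submatrix_le {a m d : ℕ} (P : Matrix (Fin m) (Fin d) ℝ) (f : Fin a → Fin m) :
    rowNormMax (P.submatrix f id) ≤ rowNormMax P :=
  Real.iSup_le
    (fun i => le_ciSup (f := fun i => √(∑ j, P i j ^ 2)) (Set.finite_range _).bddAbove (f i))
    (rowNormMax_nonneg P)

lemma maxNorm_submatrix_le {a b m n : ℕ} (X : Matrix (Fin m) (Fin n) ℝ) (f : Fin a → Fin m)
    (g : Fin b → Fin n) : maxNorm (X.submatrix f g) ≤ maxNorm X := by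
  refine le_csInf ⟨_, n, X, 1, by rw [transpose_one, Matrix.mul_one], rfl⟩ ?_
  rintro _ ⟨d, P, Q, rfl, rfl⟩
  have hfac : (P * Qᵀ).submatrix f g = P.submatrix f id * (Q.submatrix g id)ᵀ := by
    ext i j
    simp [mul_apply]
  exact (maxNorm_le_of_eq_mul_transpose hfac).trans <|
    mul_le_mul (rowNormMax_submatrix_le P f) (rowNormMax_submatrix_le Q g)
      (rowNormMax_nonneg _) (rowNormMax_nonneg _)

lemma maxNorm_submatrix_of_surjective {a b m n : ℕ} (X : Matrix (Fin m) (Fin n) ℝ)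
    {f : Fin a → Fin m} {g : Fin b → Fin n} (hf : f.Surjective) (hg : g.Surjective) :
    maxNorm (X.submatrix f g) = maxNorm X := by
  refine le_antisymm (maxNorm_submatrix_le X f g) ?_
  simpa [submatrix_submatrix, Function.comp_surjInv] using
    maxNorm_submatrix_le (X.submatrix f g) (Function.surjInv hf) (Function.surjInv hg)

lemma submatrix_one_mul_mul_transpose_submatrix_one {ι κ μ ν α : Type*} [Fintype κ]
    [DecidableEq κ] [Fintype ν] [DecidableEq ν] [NonAssocSemiring α]
    (X : Matrix κ ν α) (r : ι → κ) (c : μ → ν) :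
    (1 : Matrix κ κ α).submatrix r id * X * ((1 : Matrix ν ν α).submatrix c id)ᵀ =
      X.submatrix r c := by
  ext i j
  simp [mul_apply, one_apply]

lemma IsBlockExpansion.exists_surjective_eq_submatrix_one {m k : ℕ}
    {R : Matrix (Fin m) (Fin k) ℝ} (hR : IsBlockExpansion R) :
    ∃ r : Fin m → Fin k, r.Surjective ∧
      R = (1 : Matrix (Fin k) (Fin k) ℝ).submatrix r id := by
  obtain ⟨hrows, hrank⟩ := hR
  choose r hr using hrows
  refine ⟨r, ?_, by ext i j; simp [hr i j, one_apply, eq_comm]⟩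
  -- the columns of `R` outside the range of `r` vanish, so they cannot carry rank
  have hcols : Function.support Rᵀ.row ⊆ Finset.univ.image r := by
    intro j hj
    by_contra hjr
    have hjr : ∀ i, r i ≠ j := by simpa using hjr
    exact hj (funext fun i => (hr i j).trans (if_neg (hjr i).symm))
  have hcard : k ≤ (Finset.univ.image r).card := by
    simpa [rank_transpose, hrank] using rank_le_card_of_support_subset Rᵀ _ hcols
  have himage : Finset.univ.image r = Finset.univ :=
    Finset.eq_univ_of_card _ (le_antisymm (Finset.card_le_univ _) (by simpa using hcard))
  intro j
  obtain ⟨i, -, hi⟩ := Finset.mem_image.mp (himage ▸ Finset.mem_univ j)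
  exact ⟨i, hi⟩

theorem stmt_9_general {m k n ℓ : ℕ}
    (R : Matrix (Fin m) (Fin k) ℝ) (hR : IsBlockExpansion R)
    (C : Matrix (Fin n) (Fin ℓ) ℝ) (hC : IsBlockExpansion C)
    (X : Matrix (Fin k) (Fin ℓ) ℝ) :
    maxNorm (R * X * Cᵀ) = maxNorm X := by
  obtain ⟨r, hr, rfl⟩ := hR.exists_surjective_eq_submatrix_one
  obtain ⟨c, hc, rfl⟩ := hC.exists_surjective_eq_submatrix_one
  rw [submatrix_one_mul_mul_transpose_submatrix_one]
  exact maxNorm_submatrix_of_surjective X hr hc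

theorem stmt_9 {m k n ℓ : ℕ} (hk : 0 < k) (hℓ : 0 < ℓ) (hmk : k ≤ m) (hnl : ℓ ≤ n)
    (R : Matrix (Fin m) (Fin k) ℝ) (hR : IsBlockExpansion R)
    (C : Matrix (Fin n) (Fin ℓ) ℝ) (hC : IsBlockExpansion C)
    (X : Matrix (Fin k) (Fin ℓ) ℝ) :
    maxNorm (R * X * Cᵀ) = maxNorm X :=
  stmt_9_general R hR C hC X
end

section
/- Let γ ∈ (0,1], y ∈ {-1,1}, ȳ ∈ ℝ, let Y be uniformly distributed on (-γ, γ), and let ŷ = sign(ȳ - Y). Then 2·P(ŷ ≠ y) ≤ h_γ(y, ȳ), where h_γ(y, ȳ) := (1/γ)·max(γ - y·ȳ, 0) is the hinge loss at margin γ. -/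
open MeasureTheory Set

def thresholdErrorSet (γ y ybar : ℝ) : Set ℝ :=
  {v | v ∈ Ioo (-γ) γ ∧ (if 0 < ybar - v then (1 : ℝ) else -1) ≠ y}

lemma thresholdErrorSet_one_subset_Icc (γ ybar : ℝ) :
    thresholdErrorSet γ 1 ybar ⊆ Icc ybar γ := by
  rintro v ⟨hv, hne⟩
  have : ¬ 0 < ybar - v := fun h => hne (if_pos h)
  exact ⟨by linarith, hv.2.le⟩

lemma thresholdErrorSet_neg_one_subset_Icc (γ ybar : ℝ) :
    thresholdErrorSet γ (-1) ybar ⊆ Icc (-γ) ybar := by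
  rintro v ⟨hv, hne⟩
  have : 0 < ybar - v := by
    by_contra h
    exact hne (if_neg h)
  exact ⟨hv.1.le, by linarith⟩

/-- In both cases the error set lies in an interval of length `γ - y * ybar`. -/
lemma volume_thresholdErrorSet_toReal_le (γ ybar : ℝ) {y : ℝ} (hy : y = 1 ∨ y = -1) :
    (volume (thresholdErrorSet γ y ybar)).toReal ≤ max (γ - y * ybar) 0 := by
  obtain ⟨a, b, hsub, hlen⟩ : ∃ a b, thresholdErrorSet γ y ybar ⊆ Icc a b ∧ b - a = γ - y * ybar := by
    rcases hy with rfl | rfl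
    · exact ⟨ybar, γ, thresholdErrorSet_one_subset_Icc γ ybar, by ring⟩
    · exact ⟨-γ, ybar, thresholdErrorSet_neg_one_subset_Icc γ ybar, by ring⟩
  calc (volume (thresholdErrorSet γ y ybar)).toReal
      ≤ (volume (Icc a b)).toReal := ENNReal.toReal_mono measure_Icc_lt_top.ne (measure_mono hsub)
    _ = max (γ - y * ybar) 0 := by rw [Real.volume_Icc, ENNReal.toReal_ofReal', hlen]

theorem stmt_17 (γ : ℝ) (hγ : γ ∈ Set.Ioc (0 : ℝ) 1) (y ybar : ℝ) (hy : y = 1 ∨ y = -1) :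
    -- P(ŷ ≠ y) for Y uniform on (-γ, γ) and ŷ = sign(ybar - Y)
    2 * ((volume {v : ℝ | v ∈ Set.Ioo (-γ) γ ∧
          (if 0 < ybar - v then (1 : ℝ) else -1) ≠ y}).toReal / (2 * γ))
      ≤ (1 / γ) * max (γ - y * ybar) 0 := by
  have hγ0 : 0 < γ := hγ.1
  calc 2 * ((volume (thresholdErrorSet γ y ybar)).toReal / (2 * γ))
      = (1 / γ) * (volume (thresholdErrorSet γ y ybar)).toReal := by field_simp
    _ ≤ (1 / γ) * max (γ - y * ybar) 0 := by
      gcongr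
      exact volume_thresholdErrorSet_toReal_le γ ybar hy
end
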